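/- arXiv:0811.1729 — 2 statements merged into one kernel-verified Lean document; each statement's English description precedes it below -/
import Mathlib

section
/- Let $B$ be a standard Brownian motion. For all $\epsilon > 0$, almost surely there exists $n_0(\epsilon)$ such that for all $n \ge n_0$, $|B(n)| < (1+\epsilon)\sqrt{2 n \log\log n}$. -/
open MeasureTheory ProbabilityTheory Filter Set Real Function
open scoped NNReal ENNReal Topology

/-!
Write `q = 1 + ε` and `n_k = ⌈q ^ k⌉`. Lévy's reflection inequality (split according to the first
time `j ≤ N` with `a ≤ B j`; there the independent increment `B N - B j` is nonnegative with
probability at least `1/2`) and the Gaussian tail bound give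
`P (max_{j ≤ N} |B j| ≥ a) ≤ 4 exp (-a² / 2N)`. For `N = n_{k+1}` and
`a = (1 + ε) √(2 n_k log log n_k)` the exponent is eventually at least
`(1 + ε/2) log log n_k ≥ (1 + ε/2) log (k log q)`, so these probabilities are summable, and by
Borel–Cantelli almost surely only finitely many of the events happen. Finally, for
`n_k ≤ n < n_{k+1}` the level at `n_k` is at most `(1 + ε) √(2 n log log n)`, since
`x ↦ √(2 x log log x)` is increasing for `x ≥ e`.
-/

lemma gaussianReal_Iic_zero_eq_Ici_zero (v : ℝ≥0) :
    gaussianReal 0 v (Iic 0) = gaussianReal 0 v (Ici 0) := by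
  conv_lhs => rw [← neg_zero, ← gaussianReal_map_neg]
  rw [Measure.map_apply measurable_neg measurableSet_Iic]
  simp

lemma inv_two_le_gaussianReal_Ici_zero (v : ℝ≥0) : 2⁻¹ ≤ gaussianReal 0 v (Ici 0) := by
  have hcover : (1 : ℝ≥0∞) ≤ 2 * gaussianReal 0 v (Ici 0) := calc
    1 = gaussianReal 0 v (Iic 0 ∪ Ici 0) := by rw [Iic_union_Ici, measure_univ]
    _ ≤ gaussianReal 0 v (Iic 0) + gaussianReal 0 v (Ici 0) := measure_union_le _ _
    _ = 2 * gaussianReal 0 v (Ici 0) := by rw [gaussianReal_Iic_zero_eq_Ici_zero, two_mul]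
  rwa [ENNReal.inv_le_iff_le_mul (by simp) (by simp)]

lemma gaussianReal_Ici_le_exp (v : ℝ≥0) {a : ℝ} (ha : 0 ≤ a) :
    gaussianReal 0 v (Ici a) ≤ ENNReal.ofReal (exp (-a ^ 2 / (2 * v))) := by
  rcases eq_or_ne v 0 with rfl | hv
  · -- `x / 0 = 0`, so the bound is `1`
    simp only [NNReal.coe_zero, mul_zero, div_zero, exp_zero, ENNReal.ofReal_one]
    exact prob_le_one
  have hv' : (0 : ℝ) < v := by positivity
  have hchernoff := measure_ge_le_exp_mul_mgf (X := id) (μ := gaussianReal 0 v) (t := a / v) a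
    (div_nonneg ha hv'.le) (integrable_exp_mul_gaussianReal _)
  rw [mgf_id_gaussianReal, ← exp_add] at hchernoff
  rw [← ofReal_measureReal]
  refine ENNReal.ofReal_le_ofReal (hchernoff.trans_eq ?_)
  congr 1
  field_simp
  ring

section Levy

variable {Ω : Type*} {mΩ : MeasurableSpace Ω} {S : ℕ → Ω → ℝ} {a : ℝ}

def firstPassage (S : ℕ → Ω → ℝ) (a : ℝ) (j : ℕ) : Set Ω :=
  {ω | (∀ i < j, S i ω < a) ∧ a ≤ S j ω}

lemma pairwise_disjoint_firstPassage : Pairwise (Disjoint on firstPassage S a) := by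
  have hdisj_of_lt : ∀ i j, i < j → Disjoint (firstPassage S a i) (firstPassage S a j) :=
    fun i j hij => disjoint_left.2 fun ω hi hj => (hj.1 i hij).not_ge hi.2
  intro i j hne
  rcases hne.lt_or_gt with h | h
  exacts [hdisj_of_lt i j h, (hdisj_of_lt j i h).symm]

lemma setOf_exists_le_subset_iUnion_firstPassage (N : ℕ) :
    {ω | ∃ j ≤ N, a ≤ S j ω} ⊆ ⋃ j ∈ Finset.range (N + 1), firstPassage S a j := by
  classical
  rintro ω ⟨j, hjN, hj⟩
  have hex : ∃ k, a ≤ S k ω := ⟨j, hj⟩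
  refine mem_biUnion (x := Nat.find hex) ?_ ⟨fun i hi => ?_, Nat.find_spec hex⟩
  · exact Finset.mem_range_succ_iff.2 ((Nat.find_min' hex hj).trans hjN)
  · exact lt_of_not_ge (Nat.find_min hex hi)

lemma measurableSet_firstPassage {ℱ : Filtration ℕ mΩ} (hS : Adapted ℱ S) (j : ℕ) :
    MeasurableSet[ℱ j] (firstPassage S a j) := by
  have hle : ∀ i ≤ j, Measurable[ℱ j] (S i) := fun i hi => (hS i).mono (ℱ.mono hi) le_rfl
  have hG : firstPassage S a j = (⋂ i ∈ Iio j, {ω | S i ω < a}) ∩ {ω | a ≤ S j ω} := by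
    ext; simp [firstPassage]
  rw [hG]
  exact (MeasurableSet.biInter (to_countable _) fun i hi =>
    measurableSet_lt (hle i (le_of_lt hi)) measurable_const).inter
      (measurableSet_le measurable_const (hle j le_rfl))

theorem measure_exists_le_le_two_mul {P : Measure Ω} {ℱ : Filtration ℕ mΩ} (hS : Adapted ℱ S)
    {N : ℕ} (hindep : ∀ j < N, Indep (ℱ j) (.comap (fun ω => S N ω - S j ω) inferInstance) P)
    (hmed : ∀ j < N, 2⁻¹ ≤ P {ω | 0 ≤ S N ω - S j ω}) :
    P {ω | ∃ j ≤ N, a ≤ S j ω} ≤ 2 * P {ω | a ≤ S N ω} := by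
  set G := firstPassage S a
  set D : ℕ → Set Ω := fun j => {ω | 0 ≤ S N ω - S j ω}
  have hmeas : ∀ n, Measurable (S n) := fun n => (hS n).mono (ℱ.le n) le_rfl
  have hGD : ∀ j ≤ N, P (G j) ≤ 2 * P (G j ∩ D j) := by
    intro j hj
    rcases hj.eq_or_lt with rfl | hj
    · simpa [D] using le_mul_of_one_le_left' one_le_two
    have hind : P (G j ∩ D j) = P (G j) * P (D j) := by
      refine (Indep_iff _ _ P).1 (hindep j hj) _ _ (measurableSet_firstPassage hS j) ?_
      exact measurableSet_le measurable_const (comap_measurable _)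
    calc P (G j) = 2 * (P (G j) * 2⁻¹) := by
          rw [mul_comm, mul_assoc, ENNReal.inv_mul_cancel (by simp) (by simp), mul_one]
      _ ≤ 2 * P (G j ∩ D j) := by rw [hind]; gcongr; exact hmed j hj
  have hGD_sub : ∀ j, G j ∩ D j ⊆ {ω | a ≤ S N ω} := by
    rintro j ω ⟨hG, hD⟩
    change 0 ≤ S N ω - S j ω at hD
    change a ≤ S N ω
    linarith [hG.2]
  have hdisj : (↑(Finset.range (N + 1)) : Set ℕ).PairwiseDisjoint fun j => G j ∩ D j :=
    fun i _ j _ hij => (pairwise_disjoint_firstPassage hij).mono inter_subset_left inter_subset_left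
  have hmeasGD : ∀ j, MeasurableSet (G j ∩ D j) := fun j =>
    (ℱ.le j _ (measurableSet_firstPassage hS j)).inter
      (measurableSet_le measurable_const ((hmeas N).sub (hmeas j)))
  calc P {ω | ∃ j ≤ N, a ≤ S j ω}
      ≤ P (⋃ j ∈ Finset.range (N + 1), G j) :=
        measure_mono (setOf_exists_le_subset_iUnion_firstPassage N)
    _ ≤ ∑ j ∈ Finset.range (N + 1), P (G j) := measure_biUnion_finset_le _ _
    _ ≤ ∑ j ∈ Finset.range (N + 1), 2 * P (G j ∩ D j) :=
        Finset.sum_le_sum fun j hj => hGD j (Finset.mem_range_succ_iff.1 hj)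
    _ = 2 * P (⋃ j ∈ Finset.range (N + 1), G j ∩ D j) := by
        rw [← Finset.mul_sum, measure_biUnion_finset hdisj fun j _ => hmeasGD j]
    _ ≤ 2 * P {ω | a ≤ S N ω} := by
        gcongr
        exact iUnion₂_subset fun j _ => hGD_sub j

end Levy

noncomputable def lilScale (x : ℝ) : ℝ := √(2 * x * log (log x))

lemma one_le_log_of_exp_one_le {x : ℝ} (hx : exp 1 ≤ x) : 1 ≤ log x := by
  rwa [le_log_iff_exp_le ((exp_pos 1).trans_le hx)]

lemma sq_lilScale {x : ℝ} (hx : exp 1 ≤ x) : lilScale x ^ 2 = 2 * x * log (log x) :=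
  sq_sqrt (mul_nonneg (by linarith [exp_pos 1]) (log_nonneg (one_le_log_of_exp_one_le hx)))

lemma monotoneOn_lilScale : MonotoneOn lilScale (Ici (exp 1)) := by
  intro x hx y hy hxy
  have hlog := one_le_log_of_exp_one_le hx
  have hx0 : 0 < x := (exp_pos 1).trans_le hx
  have hloglog : log (log x) ≤ log (log y) := log_le_log (by linarith) (log_le_log hx0 hxy)
  exact sqrt_le_sqrt (mul_le_mul (by linarith) hloglog (log_nonneg hlog) (by linarith))

lemma tendsto_natCeil_pow_div_natCeil_pow_succ {q : ℝ} (hq : 1 < q) :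
    Tendsto (fun k : ℕ => (⌈q ^ k⌉₊ : ℝ) / ⌈q ^ (k + 1)⌉₊) atTop (𝓝 q⁻¹) := by
  have hpow := tendsto_pow_atTop_atTop_of_one_lt hq
  have hceil := tendsto_nat_ceil_div_atTop.comp hpow
  have hceil' := tendsto_nat_ceil_div_atTop.comp (hpow.comp (tendsto_add_atTop_nat 1))
  have := (hceil.div hceil' one_ne_zero).mul_const q⁻¹
  rw [one_div_one, one_mul] at this
  refine this.congr' ((hpow.eventually_gt_atTop 0).mono fun k hk => ?_)
  simp only [Pi.div_apply, comp_apply, pow_succ]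
  field_simp

lemma summable_exp_neg_sq_lilScale_div {ε : ℝ} (hε : 0 < ε) :
    Summable fun k : ℕ =>
      exp (-((1 + ε) * lilScale ⌈(1 + ε) ^ k⌉₊) ^ 2 / (2 * ⌈(1 + ε) ^ (k + 1)⌉₊)) := by
  set q := 1 + ε with hq_def
  set r := 1 + ε / 2 with hr_def
  have hq : 1 < q := by linarith
  -- `q ^ 2 * ⌈q ^ k⌉ / ⌈q ^ (k + 1)⌉ → q`, and any exponent `r ∈ (1, q)` would do
  have hratio : ∀ᶠ k : ℕ in atTop, r ≤ q ^ 2 * ((⌈q ^ k⌉₊ : ℝ) / ⌈q ^ (k + 1)⌉₊) := by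
    refine ((tendsto_natCeil_pow_div_natCeil_pow_succ hq).const_mul _).eventually_const_le ?_
    rw [sq, mul_assoc, mul_inv_cancel₀ (by positivity), mul_one]
    linarith
  have hlarge : ∀ᶠ k : ℕ in atTop, exp 1 ≤ q ^ k :=
    (tendsto_pow_atTop_atTop_of_one_lt hq).eventually_ge_atTop _
  refine ((summable_nat_rpow.2 (by linarith : -r < -1)).mul_right (log q ^ (-r)))
    |>.of_norm_bounded_eventually_nat ?_
  filter_upwards [hratio, hlarge, eventually_ge_atTop 1] with k hk hqk hk1
  set n : ℝ := ((⌈q ^ k⌉₊ : ℕ) : ℝ)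
  have hqn : q ^ k ≤ n := Nat.le_ceil _
  have hn : exp 1 ≤ n := hqk.trans hqn
  have hlog : (k : ℝ) * log q ≤ log n := by
    rw [← log_pow]; exact log_le_log (by positivity) hqn
  have hkq : 0 < (k : ℝ) * log q := mul_pos (by exact_mod_cast hk1) (log_pos hq)
  have hL : 0 ≤ log (log n) := log_nonneg (one_le_log_of_exp_one_le hn)
  have hN : (0 : ℝ) < ⌈q ^ (k + 1)⌉₊ := by positivity
  rw [norm_of_nonneg (exp_pos _).le, ← mul_rpow (by positivity) (log_pos hq).le]
  calc exp (-((q * lilScale n) ^ 2) / (2 * ⌈q ^ (k + 1)⌉₊))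
      = exp (-(q ^ 2 * (n / ⌈q ^ (k + 1)⌉₊) * log (log n))) := by
        rw [mul_pow, sq_lilScale hn]; congr 1; field_simp
    _ ≤ exp (-(r * log (log n))) := by gcongr
    _ = log n ^ (-r) := by rw [rpow_def_of_pos (by linarith [one_le_log_of_exp_one_le hn])]; ring_nf
    _ ≤ ((k : ℝ) * log q) ^ (-r) := rpow_le_rpow_of_nonpos hkq hlog (by linarith)

lemma eventually_lt_of_forall_le_natCeil_pow {x : ℕ → ℝ} {f : ℝ → ℝ} {q c : ℝ} (hq : 1 < q)
    (hf : MonotoneOn f (Ici c)) (h : ∀ᶠ k in atTop, ∀ j ≤ ⌈q ^ (k + 1)⌉₊, x j < f ⌈q ^ k⌉₊) :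
    ∀ᶠ n : ℕ in atTop, x n < f n := by
  obtain ⟨K, hK⟩ := eventually_atTop.1
    (h.and ((tendsto_pow_atTop_atTop_of_one_lt hq).eventually_ge_atTop (max c 1)))
  refine eventually_atTop.2 ⟨⌈q ^ K⌉₊, fun n hn => ?_⟩
  have hqK : q ^ K ≤ n := Nat.ceil_le.1 hn
  have hcK : max c 1 ≤ q ^ K := (hK K le_rfl).2
  obtain ⟨k, hkn, hnk⟩ := exists_nat_pow_near (by linarith [le_max_right c 1] : 1 ≤ (n : ℝ)) hq
  have hKk : K ≤ k := by
    by_contra! hk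
    linarith [pow_le_pow_right₀ hq.le (by omega : k + 1 ≤ K)]
  obtain ⟨hx, hck⟩ := hK k hKk
  have hceil : c ≤ (⌈q ^ k⌉₊ : ℝ) := (le_max_left c 1).trans (hck.trans (Nat.le_ceil _))
  have hceil_le : (⌈q ^ k⌉₊ : ℝ) ≤ n := Nat.cast_le.2 (Nat.ceil_le.2 hkn)
  calc x n < f ⌈q ^ k⌉₊ := hx n (Nat.cast_le.1 (hnk.le.trans (Nat.le_ceil _)))
    _ ≤ f n := hf hceil (hceil.trans hceil_le) hceil_le

namespace ProbabilityTheory.IsPreBrownianReal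

variable {Ω : Type*} {mΩ : MeasurableSpace Ω} {P : Measure Ω} {B : ℝ≥0 → Ω → ℝ}

lemma indep_natural_sub (hB : IsPreBrownianReal B P) (hmeas : ∀ t, Measurable (B t))
    {j N : ℕ} (hjN : j ≤ N) :
    Indep (Filtration.natural (fun n : ℕ => B n) (fun n => (hmeas n).stronglyMeasurable) j)
      (.comap (fun ω => B N ω - B j ω) inferInstance) P := by
  have h := (IndepFun_iff_Indep _ _ P).1 (hB.indepFun_shift j)
  refine indep_of_indep_of_le_right (indep_of_indep_of_le_left h.symm ?_) ?_
  · refine iSup₂_le fun i hi => Measurable.comap_le ?_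
    have heval : Measurable fun v : Iic (j : ℝ≥0) → ℝ => v ⟨i, mem_Iic.2 (Nat.cast_le.2 hi)⟩ :=
      measurable_pi_apply _
    exact heval.comp (comap_measurable _)
  · have hN : (fun ω => B N ω - B j ω)
        = (fun f : ℝ≥0 → ℝ => f (N - j : ℕ)) ∘ fun ω t => B (j + t) ω - B j ω := by
      ext ω
      simp only [comp_apply]
      rw [← Nat.cast_add, Nat.add_sub_cancel' hjN]
    rw [hN, ← MeasurableSpace.comap_comp]
    exact MeasurableSpace.comap_mono (measurable_pi_apply _).comap_le

lemma measure_exists_le_le (hB : IsPreBrownianReal B P) (hmeas : ∀ t, Measurable (B t))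
    (N : ℕ) {a : ℝ} (ha : 0 ≤ a) :
    P {ω | ∃ j ≤ N, a ≤ B j ω} ≤ 2 * ENNReal.ofReal (exp (-a ^ 2 / (2 * N))) := by
  have hS := (Filtration.stronglyAdapted_natural (u := fun n : ℕ => B n)
    fun n => (hmeas n).stronglyMeasurable).adapted
  have hmed : ∀ j < N, 2⁻¹ ≤ P {ω | 0 ≤ B N ω - B j ω} := fun j _ => by
    have h := (hB.hasLaw_sub N j).measure_eq (p := (0 ≤ ·)) measurableSet_Ici
    exact (inv_two_le_gaussianReal_Ici_zero _).trans_eq h.symm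
  calc P {ω | ∃ j ≤ N, a ≤ B j ω}
      ≤ 2 * P {ω | a ≤ B N ω} :=
        measure_exists_le_le_two_mul hS (fun j hj => hB.indep_natural_sub hmeas hj.le) hmed
    _ ≤ 2 * ENNReal.ofReal (exp (-a ^ 2 / (2 * N))) := by
        gcongr
        rw [(hB.hasLaw_eval N).measure_eq (p := (a ≤ ·)) measurableSet_Ici]
        have h := gaussianReal_Ici_le_exp (N : ℝ≥0) ha
        rwa [NNReal.coe_natCast] at h

lemma measure_exists_le_abs_le (hB : IsPreBrownianReal B P) (hmeas : ∀ t, Measurable (B t))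
    (N : ℕ) {a : ℝ} (ha : 0 ≤ a) :
    P {ω | ∃ j ≤ N, a ≤ |B j ω|} ≤ 4 * ENNReal.ofReal (exp (-a ^ 2 / (2 * N))) := by
  have hsplit : {ω | ∃ j ≤ N, a ≤ |B j ω|}
      ⊆ {ω | ∃ j ≤ N, a ≤ B j ω} ∪ {ω | ∃ j ≤ N, a ≤ (-B) j ω} := by
    rintro ω ⟨j, hj, hja⟩
    rcases le_abs'.1 hja with h | h
    · exact Or.inr ⟨j, hj, by simp; linarith⟩
    · exact Or.inl ⟨j, hj, h⟩
  calc P {ω | ∃ j ≤ N, a ≤ |B j ω|}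
      ≤ P {ω | ∃ j ≤ N, a ≤ B j ω} + P {ω | ∃ j ≤ N, a ≤ (-B) j ω} :=
        (measure_mono hsplit).trans (measure_union_le _ _)
    _ ≤ 2 * ENNReal.ofReal (exp (-a ^ 2 / (2 * N))) + 2 * ENNReal.ofReal (exp (-a ^ 2 / (2 * N))) :=
        add_le_add (hB.measure_exists_le_le hmeas N ha)
          (hB.neg.measure_exists_le_le (fun t => (hmeas t).neg) N ha)
    _ = 4 * ENNReal.ofReal (exp (-a ^ 2 / (2 * N))) := by rw [← add_mul]; norm_num

theorem ae_eventually_abs_lt_lilScale (hB : IsPreBrownianReal B P)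
    (hmeas : ∀ t, Measurable (B t)) {ε : ℝ} (hε : 0 < ε) :
    ∀ᵐ ω ∂P, ∀ᶠ n : ℕ in atTop, |B n ω| < (1 + ε) * lilScale n := by
  let A : ℕ → Set Ω := fun k =>
    {ω | ∃ j ≤ ⌈(1 + ε) ^ (k + 1)⌉₊, (1 + ε) * lilScale ⌈(1 + ε) ^ k⌉₊ ≤ |B j ω|}
  have hA : ∑' k, P (A k) ≠ ∞ := by
    refine ne_top_of_le_ne_top ?_ (ENNReal.tsum_le_tsum fun k =>
      hB.measure_exists_le_abs_le hmeas _ (mul_nonneg (by linarith) (sqrt_nonneg _)))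
    rw [ENNReal.tsum_mul_left, ← ENNReal.ofReal_tsum_of_nonneg (fun _ => (exp_pos _).le)
      (summable_exp_neg_sq_lilScale_div hε)]
    exact ENNReal.mul_ne_top (by norm_num) ENNReal.ofReal_ne_top
  filter_upwards [ae_eventually_notMem hA] with ω hω
  refine eventually_lt_of_forall_le_natCeil_pow (by linarith : 1 < 1 + ε)
    (fun x hx y hy hxy => mul_le_mul_of_nonneg_left (monotoneOn_lilScale hx hy hxy) (by linarith))
    (hω.mono fun k hk j hj => ?_)
  exact not_le.1 fun h => hk ⟨j, hj, h⟩

end ProbabilityTheory.IsPreBrownianReal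

theorem stmt_11_general (Ω : Type) [MeasurableSpace Ω] (P : Measure Ω)
    (B : ℝ → Ω → ℝ)
    (hmeas : ∀ t, Measurable (B t))
    (hB0 : ∀ ω, B 0 ω = 0)
    (hgauss : ∀ s t : ℝ, 0 ≤ s → s ≤ t →
      Measure.map (fun ω => B t ω - B s ω) P = gaussianReal 0 (Real.toNNReal (t - s)))
    (hindep : ∀ (m : ℕ) (t : Fin (m + 1) → ℝ), (∀ i, 0 ≤ t i) → Monotone t →
      iIndepFun
        (fun i : Fin m => fun ω => B (t i.succ) ω - B (t i.castSucc) ω) P)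
    (ε : ℝ) (hε : 0 < ε) :
    ∀ᵐ ω ∂P, ∃ n0 : ℕ, ∀ n : ℕ, n0 ≤ n →
      |B n ω| < (1 + ε) * Real.sqrt (2 * n * Real.log (Real.log n)) := by
  have hW : IsPreBrownianReal (fun t : ℝ≥0 => B t) P := by
    refine HasIndepIncrements.isPreBrownianReal_of_hasLaw
      (fun t => ⟨(hmeas t).aemeasurable, ?_⟩) fun n t ht => ?_
    · simpa [hB0] using hgauss 0 t le_rfl t.2
    · exact hindep n (fun i => t i) (fun i => (t i).2) fun i j hij => ht hij
  filter_upwards [hW.ae_eventually_abs_lt_lilScale (fun t => hmeas t) hε] with ω hω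
  exact eventually_atTop.1 hω

/-- Law of the iterated logarithm bound: for a standard Brownian motion `B` (vanishing at
`0`, continuous paths, independent Gaussian increments `B(t) - B(s) ~ N(0, t-s)`),
for every `ε > 0`, almost surely there is `n₀` with
`|B(n)| < (1+ε)√(2 n log log n)` for all `n ≥ n₀`. -/
theorem stmt_11 (Ω : Type) [MeasurableSpace Ω] (P : Measure Ω) [IsProbabilityMeasure P]
    (B : ℝ → Ω → ℝ)
    (hmeas : ∀ t, Measurable (B t))
    (hB0 : ∀ ω, B 0 ω = 0)
    (hcont : ∀ ω, Continuous fun t => B t ω)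
    (hgauss : ∀ s t : ℝ, 0 ≤ s → s ≤ t →
      Measure.map (fun ω => B t ω - B s ω) P = gaussianReal 0 (Real.toNNReal (t - s)))
    (hindep : ∀ (m : ℕ) (t : Fin (m + 1) → ℝ), (∀ i, 0 ≤ t i) → Monotone t →
      iIndepFun
        (fun i : Fin m => fun ω => B (t i.succ) ω - B (t i.castSucc) ω) P)
    (ε : ℝ) (hε : 0 < ε) :
    ∀ᵐ ω ∂P, ∃ n0 : ℕ, ∀ n : ℕ, n0 ≤ n →
      |B n ω| < (1 + ε) * Real.sqrt (2 * n * Real.log (Real.log n)) :=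
  stmt_11_general Ω P B hmeas hB0 hgauss hindep ε hε
end

section
/- Let $(h_n)$ be real numbers with $n^{-1}\sum_{i=1}^n h_i \to L$ for a finite limit $L$ (Cesàro convergence), and let $b_n$ be a monotone nondecreasing integer sequence with $b_n \to \infty$ and $b_n \le n$. Suppose additionally there exist constants $C, \sigma_h$, a Brownian path $B$ with the increment bound of Lemma 2, and $\alpha \in (0, 1/2)$ with $b_n^{-1} n^{2\alpha}\log n \to 0$, such that $|\sum_{i=1}^m h_i - m L - \sigma_h B(m)| \le C m^{2\alpha}\log m$ for all large $m$. Then $b_n^{-1}\sum_{i=n-b_n+1}^n h_i$ is bounded as $n \to \infty$; in fact $b_n^{-1}\sum_{i=n-b_n+1}^n h_i \le L + 2C b_n^{-1} n^{2\alpha}\log n + O((b_n^{-1}\log n)^{1/2})$ for large $n$. -/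
/-!
Write `S m = ∑_{i ≤ m} hᵢ` and `R m = S m - m L - σ B m` (`sipError`). The tail sum is
`S n - S (n - bₙ) = bₙ L + σ (B n - B (n - bₙ)) + R n - R (n - bₙ)`.
The strong invariance principle bounds both remainders by a constant plus `|C| n^{2α} log n`,
which is at most `bₙ` for large `n`; since then also `log n ≤ bₙ`, the Brownian increment bound
gives `|B n - B (n - bₙ)| ≤ 2 √(2 bₙ · 2 log n) ≤ 4 bₙ`. Dividing by `bₙ ≥ 1` bounds the average.
-/

open Finset Filter

noncomputable def sipError (h : ℕ → ℝ) (L σ : ℝ) (B : ℝ → ℝ) (m : ℕ) : ℝ :=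
  ∑ i ∈ Icc 1 m, h i - m * L - σ * B m

theorem sum_Icc_add_one_eq_sipError (h : ℕ → ℝ) (L σ : ℝ) (B : ℝ → ℝ) {m n : ℕ}
    (hmn : m ≤ n) :
    ∑ i ∈ Icc (m + 1) n, h i = sipError h L σ B n - sipError h L σ B m
      + ((n : ℝ) - m) * L + σ * (B n - B m) := by
  have hIcc (k : ℕ) : Icc 1 k = Ioc 0 k := Icc_add_one_left_eq_Ioc 0 k
  have hsplit := sum_Ioc_consecutive h (Nat.zero_le m) hmn
  rw [Icc_add_one_left_eq_Ioc]
  simp only [sipError, hIcc]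
  linarith

theorem abs_tail_average_le (h : ℕ → ℝ) (L σ : ℝ) (B : ℝ → ℝ) {n b : ℕ} (hbn : b ≤ n)
    (hb : 0 < b) {K : ℝ} (hKn : |sipError h L σ B n| ≤ K)
    (hKm : |sipError h L σ B (n - b)| ≤ K) :
    |(∑ i ∈ Icc (n - b + 1) n, h i) / b| ≤
      2 * (K / b) + |L| + |σ| * (|B n - B ((n : ℝ) - b)| / b) := by
  have hbpos : (0 : ℝ) < b := by exact_mod_cast hb
  have htail := sum_Icc_add_one_eq_sipError h L σ B (Nat.sub_le n b)
  rw [Nat.cast_sub hbn, sub_sub_cancel] at htail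
  rw [htail, abs_div, abs_of_pos hbpos, div_le_iff₀ hbpos]
  calc _ ≤ |sipError h L σ B n| + |sipError h L σ B (n - b)| + |b * L|
        + |σ * (B n - B ((n : ℝ) - b))| :=
          (abs_add_three _ _ _).trans (by gcongr; exact abs_sub _ _)
    _ = |sipError h L σ B n| + |sipError h L σ B (n - b)| + b * |L|
        + |σ| * |B n - B ((n : ℝ) - b)| := by rw [abs_mul, abs_mul, abs_of_pos hbpos]
    _ ≤ _ := by
      field_simp
      linarith

theorem monotone_natCast_rpow_mul_log {a : ℝ} (ha : 0 ≤ a) :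
    Monotone fun k : ℕ => (k : ℝ) ^ a * Real.log k := by
  intro k n hkn
  have hkn' : (k : ℝ) ≤ n := by exact_mod_cast hkn
  rcases k.eq_zero_or_pos with rfl | hk
  · simp only [CharP.cast_eq_zero, Real.log_zero, mul_zero]
    exact mul_nonneg (Real.rpow_nonneg n.cast_nonneg a) (Real.log_natCast_nonneg n)
  · have hk' : (0 : ℝ) < k := by exact_mod_cast hk
    exact mul_le_mul (Real.rpow_le_rpow hk'.le hkn' ha) (Real.log_le_log hk' hkn')
      (Real.log_natCast_nonneg k) (Real.rpow_nonneg (by positivity) a)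

theorem exists_abs_le_add_of_eventually_le_monotone {f g : ℕ → ℝ} (hg : Monotone g)
    (hg0 : ∀ n, 0 ≤ g n) {m0 : ℕ} (hf : ∀ m, m0 ≤ m → |f m| ≤ g m) :
    ∃ K, 0 ≤ K ∧ ∀ k n, k ≤ n → |f k| ≤ K + g n := by
  have hK0 : 0 ≤ ∑ k ∈ range m0, |f k| := sum_nonneg fun _ _ => abs_nonneg _
  refine ⟨∑ k ∈ range m0, |f k|, hK0, fun k n hkn => ?_⟩
  rcases lt_or_ge k m0 with hk | hk
  · have := single_le_sum (fun j _ => abs_nonneg (f j)) (mem_range.mpr hk)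
    linarith [hg0 n]
  · linarith [hf k hk, hg hkn]

theorem sqrt_two_mul_log_div_add_log_log_le {n b : ℝ} (hb : 1 ≤ b) (hn : 1 ≤ n)
    (hlog : Real.log n ≤ b) :
    Real.sqrt (2 * b * (Real.log (n / b) + Real.log (Real.log n))) ≤ 2 * b := by
  have hlog0 : 0 ≤ Real.log n := Real.log_nonneg hn
  have h1 : Real.log (n / b) ≤ Real.log n :=
    Real.log_le_log (by positivity) (div_le_self (by linarith) hb)
  have h2 : Real.log (Real.log n) ≤ Real.log n := Real.log_le_self hlog0
  exact Real.sqrt_le_iff.mpr ⟨by linarith, by nlinarith⟩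

theorem stmt_15_general (h : ℕ → ℝ) (L : ℝ)
    (b : ℕ → ℕ) (hbtop : Tendsto b atTop atTop)
    (hble : ∀ n, b n ≤ n)
    (C σh α : ℝ) (hα0 : 0 < α)
    (B : ℝ → ℝ)
    (hratio : Tendsto (fun n : ℕ =>
      (n : ℝ) ^ (2 * α) * Real.log n / (b n : ℝ)) atTop (nhds 0))
    (hSIP : ∃ m0 : ℕ, ∀ m : ℕ, m0 ≤ m →
      |(∑ i ∈ Finset.Icc 1 m, h i) - (m : ℝ) * L - σh * B m| ≤
        C * (m : ℝ) ^ (2 * α) * Real.log m)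
    (hincr : ∀ ε : ℝ, 0 < ε → ∃ n0 : ℕ, ∀ n : ℕ, n0 ≤ n →
      |B n - B ((n : ℝ) - b n)| ≤
        (1 + ε) * Real.sqrt (2 * (b n : ℝ) *
          (Real.log ((n : ℝ) / b n) + Real.log (Real.log n)))) :
    ∃ M : ℝ, ∀ᶠ n : ℕ in atTop,
      |(∑ i ∈ Finset.Icc (n - b n + 1) n, h i) / (b n : ℝ)| ≤ M := by
  set g : ℕ → ℝ := fun k => (k : ℝ) ^ (2 * α) * Real.log k
  have hg_mono : Monotone g := monotone_natCast_rpow_mul_log (by linarith)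
  have hg0 (n : ℕ) : 0 ≤ g n := (hg_mono n.zero_le).trans_eq' (by simp [g])
  obtain ⟨m0, hm0⟩ := hSIP
  have hSIP' (m : ℕ) (hm : m0 ≤ m) : |sipError h L σh B m| ≤ |C| * g m := by
    have hm := hm0 m hm
    rw [mul_assoc] at hm
    exact hm.trans (mul_le_mul_of_nonneg_right (le_abs_self C) (hg0 m))
  obtain ⟨K, hK0, hK⟩ := exists_abs_le_add_of_eventually_le_monotone
    (hg_mono.const_mul (abs_nonneg C)) (fun n => mul_nonneg (abs_nonneg C) (hg0 n)) hSIP'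
  obtain ⟨n1, hn1⟩ := hincr 1 one_pos
  refine ⟨2 * (K + |C|) + |L| + |σh| * 4, ?_⟩
  filter_upwards [hratio.eventually (ge_mem_nhds one_pos), hbtop.eventually_ge_atTop 1,
    eventually_ge_atTop 1, eventually_ge_atTop n1] with n hratio_n hb1 hn1' hnn1
  have hb : (1 : ℝ) ≤ b n := by exact_mod_cast hb1
  have hn : (1 : ℝ) ≤ n := by exact_mod_cast hn1'
  have hgb : g n ≤ b n := by rwa [div_le_one (by linarith)] at hratio_n
  have hlog : Real.log n ≤ b n :=
    le_trans (le_mul_of_one_le_left (Real.log_nonneg hn) (Real.one_le_rpow hn (by linarith))) hgb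
  have hKb : (K + |C| * g n) / b n ≤ K + |C| := by
    rw [div_le_iff₀ (by linarith)]
    nlinarith [mul_le_mul_of_nonneg_left hgb (abs_nonneg C)]
  have hBb : |B n - B ((n : ℝ) - b n)| / b n ≤ 4 := by
    rw [div_le_iff₀ (by linarith)]
    linarith [hn1 n hnn1, sqrt_two_mul_log_div_add_log_log_le hb hn hlog]
  calc _ ≤ 2 * ((K + |C| * g n) / b n) + |L| + |σh| * (|B n - B ((n : ℝ) - b n)| / b n) :=
        abs_tail_average_le h L σh B (hble n) hb1 (hK n n le_rfl) (hK _ n (Nat.sub_le n (b n)))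
    _ ≤ 2 * (K + |C|) + |L| + |σh| * 4 := by gcongr

/-- Tail-average boundedness (Lemma 5): under Cesàro convergence of `(hᵢ)` to `L`, a
strong-invariance-principle bound with rate `m^{2α} log m` relative to a path `B`
satisfying the Brownian increment bound, and `bₙ⁻¹ n^{2α} log n → 0`, the averages
`bₙ⁻¹ ∑_{i=n-bₙ+1}^n hᵢ` stay bounded as `n → ∞`. -/
theorem stmt_15 (h : ℕ → ℝ) (L : ℝ)
    (hces : Tendsto (fun n : ℕ => (∑ i ∈ Finset.Icc 1 n, h i) / n) atTop (nhds L))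
    (b : ℕ → ℕ) (hbmono : Monotone b) (hbtop : Tendsto b atTop atTop)
    (hble : ∀ n, b n ≤ n)
    (C σh α : ℝ) (hα0 : 0 < α) (hα : α < 1 / 2)
    (B : ℝ → ℝ)
    (hratio : Tendsto (fun n : ℕ =>
      (n : ℝ) ^ (2 * α) * Real.log n / (b n : ℝ)) atTop (nhds 0))
    (hSIP : ∃ m0 : ℕ, ∀ m : ℕ, m0 ≤ m →
      |(∑ i ∈ Finset.Icc 1 m, h i) - (m : ℝ) * L - σh * B m| ≤
        C * (m : ℝ) ^ (2 * α) * Real.log m)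
    (hincr : ∀ ε : ℝ, 0 < ε → ∃ n0 : ℕ, ∀ n : ℕ, n0 ≤ n →
      |B n - B ((n : ℝ) - b n)| ≤
        (1 + ε) * Real.sqrt (2 * (b n : ℝ) *
          (Real.log ((n : ℝ) / b n) + Real.log (Real.log n)))) :
    ∃ M : ℝ, ∀ᶠ n : ℕ in atTop,
      |(∑ i ∈ Finset.Icc (n - b n + 1) n, h i) / (b n : ℝ)| ≤ M :=
  stmt_15_general h L b hbtop hble C σh α hα0 B hratio hSIP hincr
end
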